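/- arXiv:2010.03170 — 2 statements merged into one kernel-verified Lean document; each statement's English description precedes it below -/
import Mathlib

section
/- The optimizer of the friction ellipsoid problem satisfies the following complementarity formulation: setting σ = √(et² vt² + eo² vo² + er² vr²), the maximizer (λt, λo, λr) satisfies et² μ λn vt + λt σ = 0, eo² μ λn vo + λo σ = 0, er² μ λn vr + λr σ = 0, and σ ≥ 0 with σ·(μ²λn² − (λt/et)² − (λo/eo)² − (λr/er)²) = 0. -/
set_option maxHeartbeats 800000


theorem stmt_11 (et eo er μ lamn vt vo vr lamt lamo lamr σ : ℝ)
    (het : 0 < et) (heo : 0 < eo) (her : 0 < er) (hμ : 0 < μ) (hlamn : 0 < lamn)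
    (hv : ¬(vt = 0 ∧ vo = 0 ∧ vr = 0))
    (hσ : σ = Real.sqrt (et ^ 2 * vt ^ 2 + eo ^ 2 * vo ^ 2 + er ^ 2 * vr ^ 2))
    (hfeas : (lamt / et) ^ 2 + (lamo / eo) ^ 2 + (lamr / er) ^ 2 ≤ μ ^ 2 * lamn ^ 2)
    (hmax : ∀ lamt' lamo' lamr' : ℝ,
      (lamt' / et) ^ 2 + (lamo' / eo) ^ 2 + (lamr' / er) ^ 2 ≤ μ ^ 2 * lamn ^ 2 →
      -(vt * lamt' + vo * lamo' + vr * lamr') ≤ -(vt * lamt + vo * lamo + vr * lamr)) :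
    et ^ 2 * μ * lamn * vt + lamt * σ = 0 ∧
    eo ^ 2 * μ * lamn * vo + lamo * σ = 0 ∧
    er ^ 2 * μ * lamn * vr + lamr * σ = 0 ∧
    0 ≤ σ ∧
    0 ≤ μ ^ 2 * lamn ^ 2 - (lamt / et) ^ 2 - (lamo / eo) ^ 2 - (lamr / er) ^ 2 ∧
    σ * (μ ^ 2 * lamn ^ 2 - (lamt / et) ^ 2 - (lamo / eo) ^ 2 - (lamr / er) ^ 2) = 0 := by
  have het' := het.ne'
  have heo' := heo.ne'
  have her' := her.ne'
  set S : ℝ := et ^ 2 * vt ^ 2 + eo ^ 2 * vo ^ 2 + er ^ 2 * vr ^ 2 with hS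
  have hSpos : 0 < S := by
    rcases not_and_or.mp hv with h | h
    · nlinarith [sq_nonneg (et*vt), sq_nonneg (eo*vo), sq_nonneg (er*vr), sq_pos_of_ne_zero h,
        sq_pos_of_pos het]
    rcases not_and_or.mp h with h | h
    · nlinarith [sq_nonneg (et*vt), sq_nonneg (er*vr), sq_pos_of_ne_zero h, sq_pos_of_pos heo]
    · nlinarith [sq_nonneg (et*vt), sq_nonneg (eo*vo), sq_pos_of_ne_zero h, sq_pos_of_pos her]
  have hσpos : 0 < σ := hσ ▸ Real.sqrt_pos.mpr hSpos
  have hσ2 : σ ^ 2 = S := by rw [hσ, Real.sq_sqrt hSpos.le]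
  -- abbreviations
  set aT : ℝ := et * vt with hat
  set aO : ℝ := eo * vo with hao
  set aR : ℝ := er * vr with har
  set Lt : ℝ := lamt / et with hLt
  set Lo : ℝ := lamo / eo with hLo
  set Lr : ℝ := lamr / er with hLr
  have hlamt : lamt = et * Lt := by rw [hLt]; field_simp
  have hlamo : lamo = eo * Lo := by rw [hLo]; field_simp
  have hlamr : lamr = er * Lr := by rw [hLr]; field_simp
  have hSa : S = aT ^ 2 + aO ^ 2 + aR ^ 2 := by rw [hS, hat, hao, har]; ring
  clear_value S aT aO aR Lt Lo Lr
  have hmuln : 0 < μ * lamn := mul_pos hμ hlamn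
  -- apply maximality to the candidate point
  have hcand := hmax (-(et ^ 2 * μ * lamn * vt) / σ) (-(eo ^ 2 * μ * lamn * vo) / σ)
      (-(er ^ 2 * μ * lamn * vr) / σ) (by
    have : ((-(et ^ 2 * μ * lamn * vt) / σ) / et) ^ 2 + ((-(eo ^ 2 * μ * lamn * vo) / σ) / eo) ^ 2
        + ((-(er ^ 2 * μ * lamn * vr) / σ) / er) ^ 2 = μ ^ 2 * lamn ^ 2 * S / σ ^ 2 := by
      field_simp
      rw [hS]
    rw [this, hσ2, mul_div_assoc, div_self hSpos.ne']
    simp)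
  have hA : μ * lamn * σ ≤ -(vt * lamt + vo * lamo + vr * lamr) := by
    have hval : -(vt * (-(et ^ 2 * μ * lamn * vt) / σ) + vo * (-(eo ^ 2 * μ * lamn * vo) / σ)
        + vr * (-(er ^ 2 * μ * lamn * vr) / σ)) = μ * lamn * S / σ := by
      field_simp
      rw [hS]; ring
    have hq : μ * lamn * S / σ = μ * lamn * σ := by
      rw [← hσ2]; field_simp
    rw [hval, hq] at hcand
    exact hcand
  -- Cauchy–Schwarz
  have hvl : vt * lamt + vo * lamo + vr * lamr = aT * Lt + aO * Lo + aR * Lr := by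
    rw [hlamt, hlamo, hlamr, hat, hao, har]; ring
  have hCS : (aT * Lt + aO * Lo + aR * Lr) ^ 2 ≤ S * (Lt ^ 2 + Lo ^ 2 + Lr ^ 2) := by
    rw [hSa]
    nlinarith [sq_nonneg (aT * Lo - aO * Lt), sq_nonneg (aT * Lr - aR * Lt),
      sq_nonneg (aO * Lr - aR * Lo)]
  rw [hvl] at hA
  -- equality of value
  have hAeq : aT * Lt + aO * Lo + aR * Lr = -(μ * lamn * σ) := by
    nlinarith [hσ2, mul_pos hmuln hσpos, hfeas, sq_nonneg σ]
  -- equality of constraint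
  have hBeq : Lt ^ 2 + Lo ^ 2 + Lr ^ 2 = μ ^ 2 * lamn ^ 2 := by
    rw [hAeq] at hCS
    have h1 : μ ^ 2 * lamn ^ 2 * σ ^ 2 ≤ σ ^ 2 * (Lt ^ 2 + Lo ^ 2 + Lr ^ 2) := by
      calc μ ^ 2 * lamn ^ 2 * σ ^ 2 = (-(μ * lamn * σ)) ^ 2 := by ring
        _ ≤ S * (Lt ^ 2 + Lo ^ 2 + Lr ^ 2) := hCS
        _ = σ ^ 2 * (Lt ^ 2 + Lo ^ 2 + Lr ^ 2) := by rw [hσ2]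
    have hc : 0 < σ ^ 2 := by positivity
    have h2 : σ ^ 2 * (μ ^ 2 * lamn ^ 2) ≤ σ ^ 2 * (Lt ^ 2 + Lo ^ 2 + Lr ^ 2) := by linarith
    have h3 := (mul_le_mul_iff_right₀ hc).mp h2
    linarith
  -- sum of squares vanishes
  have hkey : (μ * lamn * aT + Lt * σ) ^ 2 + (μ * lamn * aO + Lo * σ) ^ 2
      + (μ * lamn * aR + Lr * σ) ^ 2 = 0 := by
    have expand : (μ * lamn * aT + Lt * σ) ^ 2 + (μ * lamn * aO + Lo * σ) ^ 2
        + (μ * lamn * aR + Lr * σ) ^ 2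
        = μ ^ 2 * lamn ^ 2 * (aT ^ 2 + aO ^ 2 + aR ^ 2)
          + 2 * μ * lamn * σ * (aT * Lt + aO * Lo + aR * Lr)
          + σ ^ 2 * (Lt ^ 2 + Lo ^ 2 + Lr ^ 2) := by ring
    rw [expand, hAeq, hBeq, ← hSa, ← hσ2]
    ring
  have s1 := sq_nonneg (μ * lamn * aT + Lt * σ)
  have s2 := sq_nonneg (μ * lamn * aO + Lo * σ)
  have s3 := sq_nonneg (μ * lamn * aR + Lr * σ)
  have two_ne : (2 : ℕ) ≠ 0 := by norm_num
  have ht0 : μ * lamn * aT + Lt * σ = 0 :=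
    pow_eq_zero_iff two_ne |>.mp (by linarith)
  have ho0 : μ * lamn * aO + Lo * σ = 0 :=
    pow_eq_zero_iff two_ne |>.mp (by linarith)
  have hr0 : μ * lamn * aR + Lr * σ = 0 :=
    pow_eq_zero_iff two_ne |>.mp (by linarith)
  refine ⟨?_, ?_, ?_, hσpos.le, by linarith, by linear_combination (-σ) * hBeq⟩
  · have : et * (μ * lamn * aT + Lt * σ) = 0 := by rw [ht0]; ring
    rw [hat] at this; rw [hlamt]
    linear_combination this
  · have : eo * (μ * lamn * aO + Lo * σ) = 0 := by rw [ho0]; ring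
    rw [hao] at this; rw [hlamo]
    linear_combination this
  · have : er * (μ * lamn * aR + Lr * σ) = 0 := by rw [hr0]; ring
    rw [har] at this; rw [hlamr]
    linear_combination this
end

section
/- For a compact set F in ℝⁿ and a supporting hyperplane H of conv(F), the set conv(F) ∩ H is a convex set, and it is the convex hull of F ∩ H when F is compact; i.e., every exposed face of the convex hull of a compact set is the convex hull of the points of the set lying on the corresponding supporting hyperplane. -/
open Set
open scoped InnerProductSpace

theorem stmt_15 {n : ℕ} (F : Set (EuclideanSpace ℝ (Fin n))) (hF : IsCompact F)
    (a : EuclideanSpace ℝ (Fin n)) (ha : a ≠ 0) (c : ℝ)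
    (hc : c = sSup {r : ℝ | ∃ x ∈ F, r = ⟪a, x⟫_ℝ}) :
    convexHull ℝ F ∩ {x | ⟪a, x⟫_ℝ = c} =
      convexHull ℝ (F ∩ {x | ⟪a, x⟫_ℝ = c}) := by
  have hbdd : BddAbove {r : ℝ | ∃ x ∈ F, r = ⟪a, x⟫_ℝ} := by
    have : {r : ℝ | ∃ x ∈ F, r = ⟪a, x⟫_ℝ} = (fun x => ⟪a, x⟫_ℝ) '' F := by
      ext r; simp [eq_comm]
    rw [this]
    exact (hF.image (Continuous.inner continuous_const continuous_id)).bddAbove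
  have hle : ∀ x ∈ F, ⟪a, x⟫_ℝ ≤ c := fun x hx => hc ▸ le_csSup hbdd ⟨x, hx, rfl⟩
  apply Subset.antisymm
  · rintro x ⟨hxc, hxH⟩
    rw [convexHull_eq] at hxc
    obtain ⟨ι, t, w, z, hw₀, hw₁, hz, hx⟩ := hxc
    -- each point with nonzero weight lies on the hyperplane
    have key : ∀ i ∈ t, w i ≠ 0 → ⟪a, z i⟫_ℝ = c := by
      intro i hi hwi
      by_contra hne
      have hlt : ⟪a, z i⟫_ℝ < c := lt_of_le_of_ne (hle _ (hz i hi)) hne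
      have hsum : ∑ j ∈ t, w j * ⟪a, z j⟫_ℝ = c := by
        have := hx
        rw [Finset.centerMass_eq_of_sum_1 _ _ hw₁] at this
        calc ∑ j ∈ t, w j * ⟪a, z j⟫_ℝ = ⟪a, ∑ j ∈ t, w j • z j⟫_ℝ := by
              rw [inner_sum]; congr 1; ext j; rw [real_inner_smul_right]
          _ = c := by rw [this]; exact hxH
      have hsum_le : ∑ j ∈ t, w j * ⟪a, z j⟫_ℝ < ∑ j ∈ t, w j * c := by
        apply Finset.sum_lt_sum
        · intro j hj
          exact mul_le_mul_of_nonneg_left (hle _ (hz j hj)) (hw₀ j hj)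
        · exact ⟨i, hi, mul_lt_mul_of_pos_left hlt (lt_of_le_of_ne (hw₀ i hi) (Ne.symm hwi))⟩
      rw [hsum, ← Finset.sum_mul, hw₁, one_mul] at hsum_le
      exact lt_irrefl _ hsum_le
    rw [← Finset.centerMass_filter_ne_zero (z := z)] at hx
    rw [← hx]
    apply Finset.centerMass_mem_convexHull
    · intro i hi; exact hw₀ i (Finset.mem_filter.mp hi).1
    · rw [Finset.sum_filter_ne_zero, hw₁]; exact one_pos
    · intro i hi
      obtain ⟨hit, hwi⟩ := Finset.mem_filter.mp hi
      exact ⟨hz i hit, key i hit hwi⟩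
  · apply subset_inter
    · exact convexHull_mono inter_subset_left
    · have hlin : IsLinearMap ℝ (fun x : EuclideanSpace ℝ (Fin n) => ⟪a, x⟫_ℝ) :=
        ⟨fun x y => inner_add_right a x y, fun r x => real_inner_smul_right a x r⟩
      have hconv : Convex ℝ {x : EuclideanSpace ℝ (Fin n) | ⟪a, x⟫_ℝ = c} :=
        convex_hyperplane hlin c
      exact convexHull_min inter_subset_right hconv
end
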